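/- arXiv:1201.3961 — 2 statements merged into one kernel-verified Lean document; each statement's English description precedes it below -/
import Mathlib

section
/- Let ω₁, ω₂, η₁, η₂ be g×g complex matrices with ω₁, ω₂ invertible, 𝔹 = ω₁⁻¹ω₂ symmetric, Λ symmetric, η₁ = (ω₁ᵗ)⁻¹Λ, η₂ = (ω₁ᵗ)⁻¹(Λ𝔹 − (πi/2)I). Let γ = [[A,B],[C,D]] ∈ Sp(2g, ℤ), and set ω₁^γ = ω₂Cᵗ + ω₁Dᵗ, ω₂^γ = ω₂Aᵗ + ω₁Bᵗ, η₁^γ = η₂Cᵗ + η₁Dᵗ, η₂^γ = η₂Aᵗ + η₁Bᵗ. Then the Legendre relation is preserved: η₁^γ(ω₂^γ)ᵗ − η₂^γ(ω₁^γ)ᵗ = (πi/2)I. -/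
open Matrix Complex

/-- Map an integer matrix to a complex matrix entrywise. -/
def mc {g : ℕ} (M : Matrix (Fin g) (Fin g) ℤ) : Matrix (Fin g) (Fin g) ℂ :=
  M.map (Int.cast : ℤ → ℂ)

lemma mc_mul {g : ℕ} (M N : Matrix (Fin g) (Fin g) ℤ) : mc (M * N) = mc M * mc N := by
  ext i j; simp [mc, Matrix.mul_apply]

lemma mc_transpose {g : ℕ} (M : Matrix (Fin g) (Fin g) ℤ) : mc Mᵀ = (mc M)ᵀ := by
  ext i j; simp [mc]

lemma mc_one {g : ℕ} : mc (1 : Matrix (Fin g) (Fin g) ℤ) = 1 := by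
  ext i j; simp [mc, Matrix.one_apply]

lemma mc_sub {g : ℕ} (M N : Matrix (Fin g) (Fin g) ℤ) : mc (M - N) = mc M - mc N := by
  ext i j; simp [mc]

theorem statement9 {g : ℕ} (ω₁ ω₂ Λ η₁ η₂ : Matrix (Fin g) (Fin g) ℂ)
    (hω₁ : IsUnit ω₁) (hω₂ : IsUnit ω₂)
    (hB : (ω₁⁻¹ * ω₂)ᵀ = ω₁⁻¹ * ω₂) (hΛ : Λᵀ = Λ)
    (hη₁ : η₁ = ω₁ᵀ⁻¹ * Λ)
    (hη₂ : η₂ = ω₁ᵀ⁻¹ * (Λ * (ω₁⁻¹ * ω₂) - ((↑Real.pi * I / 2 : ℂ)) • (1 : Matrix (Fin g) (Fin g) ℂ)))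
    (A B C D : Matrix (Fin g) (Fin g) ℤ)
    (hAC : Aᵀ * C = Cᵀ * A) (hBD : Bᵀ * D = Dᵀ * B) (hAD : Aᵀ * D - Cᵀ * B = 1) :
    (η₂ * (mc C)ᵀ + η₁ * (mc D)ᵀ) * (ω₂ * (mc A)ᵀ + ω₁ * (mc B)ᵀ)ᵀ
      - (η₂ * (mc A)ᵀ + η₁ * (mc B)ᵀ) * (ω₂ * (mc C)ᵀ + ω₁ * (mc D)ᵀ)ᵀ
      = ((↑Real.pi * I / 2 : ℂ)) • (1 : Matrix (Fin g) (Fin g) ℂ) := by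
  set c : ℂ := (↑Real.pi * I / 2 : ℂ) with hc
  have hω₁T : IsUnit ω₁ᵀ := by
    simpa [Matrix.isUnit_iff_isUnit_det, Matrix.det_transpose] using hω₁
  have hinv : ω₁ᵀ⁻¹ * ω₁ᵀ = 1 :=
    Matrix.nonsing_inv_mul _ ((Matrix.isUnit_iff_isUnit_det _).mp hω₁T)
  -- the Legendre relation for the original matrices
  have hBω : ω₁⁻¹ * ω₂ * ω₁ᵀ = ω₂ᵀ := by
    have h1 : ω₁⁻¹ * ω₂ = ω₂ᵀ * ω₁ᵀ⁻¹ := by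
      rw [← hB, Matrix.transpose_mul, Matrix.transpose_nonsing_inv]
    rw [h1, Matrix.mul_assoc, hinv, Matrix.mul_one]
  have hL : η₁ * ω₂ᵀ - η₂ * ω₁ᵀ = c • (1 : Matrix (Fin g) (Fin g) ℂ) := by
    rw [hη₁, hη₂, Matrix.mul_sub, Matrix.sub_mul]
    rw [show ω₁ᵀ⁻¹ * (Λ * (ω₁⁻¹ * ω₂)) * ω₁ᵀ = ω₁ᵀ⁻¹ * Λ * ω₂ᵀ from by
      rw [Matrix.mul_assoc (ω₁ᵀ⁻¹), Matrix.mul_assoc Λ, hBω, ← Matrix.mul_assoc]]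
    simp only [Matrix.mul_smul, Matrix.smul_mul, Matrix.mul_one, hinv]
    abel
  -- cast the symplectic relations to ℂ
  set a := mc A; set b := mc B; set cC := mc C; set d := mc D
  have hac : cCᵀ * a = aᵀ * cC := by
    have := congrArg mc hAC
    rw [mc_mul, mc_mul, mc_transpose, mc_transpose] at this
    exact this.symm
  have hbd : dᵀ * b = bᵀ * d := by
    have := congrArg mc hBD
    rw [mc_mul, mc_mul, mc_transpose, mc_transpose] at this
    exact this.symm
  have had : aᵀ * d - cCᵀ * b = 1 := by
    have := congrArg mc hAD
    rw [mc_sub, mc_mul, mc_mul, mc_transpose, mc_transpose, mc_one] at this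
    exact this
  have had' : dᵀ * a - bᵀ * cC = 1 := by
    have := congrArg Matrix.transpose had
    simpa [Matrix.transpose_sub, Matrix.transpose_mul] using this
  have expand :
      (η₂ * cCᵀ + η₁ * dᵀ) * (ω₂ * aᵀ + ω₁ * bᵀ)ᵀ
        - (η₂ * aᵀ + η₁ * bᵀ) * (ω₂ * cCᵀ + ω₁ * dᵀ)ᵀ
      = η₂ * ((cCᵀ * a - aᵀ * cC) * ω₂ᵀ) + η₂ * ((cCᵀ * b - aᵀ * d) * ω₁ᵀ)
        + η₁ * ((dᵀ * a - bᵀ * cC) * ω₂ᵀ) + η₁ * ((dᵀ * b - bᵀ * d) * ω₁ᵀ) := by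
    simp only [Matrix.transpose_add, Matrix.transpose_mul, Matrix.transpose_transpose]
    noncomm_ring
  rw [expand, hac, hbd, had']
  have h2 : cCᵀ * b - aᵀ * d = -1 := by
    rw [← neg_sub, had]
  rw [h2]
  simp only [sub_self, Matrix.zero_mul, Matrix.mul_zero, add_zero, Matrix.neg_mul,
    Matrix.one_mul, Matrix.mul_neg, Matrix.mul_one]
  rw [← hL]; abel
end

section
/- With σ as in the previous statement and η₂ = (ω₁ᵗ)⁻¹(Λ𝔹 − (πi/2)I), ω₂ = ω₁𝔹: for any k₂ ∈ ℤ^g, σ(u + 2ω₂k₂) = e^{2πi β₂ᵗk₂} · e^{2(ω₂k₂ + u)ᵗ η₂ k₂} · σ(u). -/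
open Matrix Complex

/-- Riemann theta function with real characteristics `α`, `β`,
period matrix `B` and argument `z`. -/
noncomputable def theta {g : ℕ} (α β : Fin g → ℝ) (B : Matrix (Fin g) (Fin g) ℂ)
    (z : Fin g → ℂ) : ℂ :=
  ∑' m : Fin g → ℤ,
    Complex.exp (↑Real.pi * I *
        ((fun i => (m i : ℂ) + (α i : ℂ)) ⬝ᵥ (B *ᵥ (fun i => (m i : ℂ) + (α i : ℂ))))
      + 2 * ↑Real.pi * I *
        ((fun i => (m i : ℂ) + (α i : ℂ)) ⬝ᵥ (fun i => z i + (β i : ℂ))))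

/-- The odd sigma function built from the theta function with characteristic. -/
noncomputable def sigma {g : ℕ} (F : ℂ) (ω₁ Λ : Matrix (Fin g) (Fin g) ℂ)
    (β₁ β₂ : Fin g → ℝ) (B : Matrix (Fin g) (Fin g) ℂ) (u : Fin g → ℂ) : ℂ :=
  F * ((2 : ℂ) • ω₁).det
    * Complex.exp ((1 / 2 : ℂ) * (u ⬝ᵥ ((ω₁ᵀ⁻¹ * Λ * ω₁⁻¹) *ᵥ u)))
    * theta β₁ β₂ B (((2 : ℂ) • ω₁)⁻¹ *ᵥ u)

lemma dot_mulVec_flip {g : ℕ} (N : Matrix (Fin g) (Fin g) ℂ) (x y : Fin g → ℂ) :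
    x ⬝ᵥ (N *ᵥ y) = y ⬝ᵥ (Nᵀ *ᵥ x) := by
  rw [Matrix.dotProduct_mulVec, ← Matrix.mulVec_transpose, dotProduct_comm]

lemma mulVec_dot_mulVec {g : ℕ} (A N : Matrix (Fin g) (Fin g) ℂ) (x y : Fin g → ℂ) :
    (A *ᵥ x) ⬝ᵥ (N *ᵥ y) = x ⬝ᵥ ((Aᵀ * N) *ᵥ y) := by
  rw [dotProduct_comm, dot_mulVec_flip, Matrix.mulVec_mulVec]

lemma theta_shift {g : ℕ} (α β : Fin g → ℝ) (B : Matrix (Fin g) (Fin g) ℂ) (hB : Bᵀ = B)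
    (z : Fin g → ℂ) (k : Fin g → ℤ) :
    theta α β B (z + B *ᵥ (fun i => (k i : ℂ)))
      = Complex.exp (-(↑Real.pi * I) * ((fun i => (k i : ℂ)) ⬝ᵥ (B *ᵥ (fun i => (k i : ℂ))))
          - 2 * ↑Real.pi * I * ((fun i => (k i : ℂ)) ⬝ᵥ (fun i => z i + (β i : ℂ))))
        * theta α β B z := by
  set c : Fin g → ℂ := fun i => (k i : ℂ) with hc
  rw [theta, theta, ← (Equiv.subRight k).tsum_eq, ← tsum_mul_left]
  refine tsum_congr fun m => ?_
  have ha : (fun i => ((Equiv.subRight k m) i : ℂ) + (α i : ℂ))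
      = (fun i => (m i : ℂ) + (α i : ℂ)) - c := by
    funext i
    simp [Equiv.subRight, c]
    ring
  rw [ha, ← Complex.exp_add]
  congr 1
  set a : Fin g → ℂ := fun i => (m i : ℂ) + (α i : ℂ) with hA
  have hsym : a ⬝ᵥ (B *ᵥ c) = c ⬝ᵥ (B *ᵥ a) := by rw [dot_mulVec_flip, hB]
  have hz : (fun i => (z + B *ᵥ c) i + (β i : ℂ)) = (fun i => z i + (β i : ℂ)) + B *ᵥ c := by
    funext i; simp [Pi.add_apply]; ring
  rw [hz]
  simp only [Matrix.mulVec_sub, dotProduct_sub, sub_dotProduct,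
    dotProduct_add, add_dotProduct]
  linear_combination ((Real.pi : ℂ) * I) * hsym

theorem statement16 {g : ℕ} (F : ℂ) (hF : F ≠ 0)
    (ω₁ B Λ : Matrix (Fin g) (Fin g) ℂ)
    (hω₁ : IsUnit ω₁)
    (hB : Bᵀ = B) (hIm : (B.map Complex.im).PosDef)
    (hΛ : Λᵀ = Λ)
    (β₁ β₂ : Fin g → ℝ)
    (hβ₁ : ∀ i, ∃ n : ℤ, β₁ i = n / 2) (hβ₂ : ∀ i, ∃ n : ℤ, β₂ i = n / 2)
    (u : Fin g → ℂ) (k₂ : Fin g → ℤ) :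
    sigma F ω₁ Λ β₁ β₂ B (u + ((2 : ℂ) • (ω₁ * B)) *ᵥ (fun i => (k₂ i : ℂ)))
      = Complex.exp (2 * ↑Real.pi * I * ((fun i => (β₂ i : ℂ)) ⬝ᵥ (fun i => (k₂ i : ℂ))))
        * Complex.exp (2 * (((ω₁ * B) *ᵥ (fun i => (k₂ i : ℂ)) + u)
            ⬝ᵥ ((ω₁ᵀ⁻¹ * (Λ * B - ((↑Real.pi * I / 2 : ℂ)) • (1 : Matrix (Fin g) (Fin g) ℂ)))
                *ᵥ (fun i => (k₂ i : ℂ)))))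
        * sigma F ω₁ Λ β₁ β₂ B u := by
  set c : Fin g → ℂ := fun i => (k₂ i : ℂ) with hc
  have hdet : IsUnit ω₁.det := (Matrix.isUnit_iff_isUnit_det ω₁).mp hω₁
  have hW : ω₁⁻¹ * ω₁ = 1 := Matrix.nonsing_inv_mul ω₁ hdet
  have hW' : ω₁ * ω₁⁻¹ = 1 := Matrix.mul_nonsing_inv ω₁ hdet
  have hTT : (ω₁ᵀ⁻¹)ᵀ = ω₁⁻¹ := by
    rw [← Matrix.transpose_nonsing_inv, Matrix.transpose_transpose]
  have hWT : ω₁ᵀ * ω₁ᵀ⁻¹ = 1 := by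
    rw [← Matrix.transpose_nonsing_inv, ← Matrix.transpose_mul, hW, Matrix.transpose_one]
  have hinv2 : ((2 : ℂ) • ω₁)⁻¹ = (2⁻¹ : ℂ) • ω₁⁻¹ := by
    apply Matrix.inv_eq_right_inv
    rw [Matrix.smul_mul, Matrix.mul_smul, hW', smul_smul]
    norm_num
  -- the shift of the theta argument
  have harg : ((2 : ℂ) • ω₁)⁻¹ *ᵥ (u + ((2 : ℂ) • (ω₁ * B)) *ᵥ c)
      = ((2 : ℂ) • ω₁)⁻¹ *ᵥ u + B *ᵥ c := by
    rw [Matrix.mulVec_add]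
    congr 1
    rw [hinv2, Matrix.mulVec_mulVec]
    congr 1
    rw [Matrix.smul_mul, Matrix.mul_smul, smul_smul, ← Matrix.mul_assoc, hW, Matrix.one_mul]
    norm_num
  -- abbreviations
  set T : Matrix (Fin g) (Fin g) ℂ := ω₁ᵀ⁻¹ with hT
  set M : Matrix (Fin g) (Fin g) ℂ := T * Λ * ω₁⁻¹ with hM
  have hMsym : Mᵀ = M := by
    rw [hM, Matrix.transpose_mul, Matrix.transpose_mul, hΛ, hTT, hT,
      ← Matrix.transpose_nonsing_inv, Matrix.mul_assoc]
  set v : Fin g → ℂ := (ω₁ * B) *ᵥ c with hv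
  have hv2 : ((2 : ℂ) • (ω₁ * B)) *ᵥ c = (2 : ℂ) • v := Matrix.smul_mulVec _ _ _
  have hMv : M *ᵥ v = (T * (Λ * B)) *ᵥ c := by
    rw [hv, Matrix.mulVec_mulVec]
    congr 1
    rw [hM, Matrix.mul_assoc (T * Λ), ← Matrix.mul_assoc ω₁⁻¹, hW, Matrix.one_mul,
      Matrix.mul_assoc]
  have hvMu : v ⬝ᵥ (M *ᵥ u) = u ⬝ᵥ ((T * (Λ * B)) *ᵥ c) := by
    rw [dot_mulVec_flip M v u, hMsym, hMv]
  have hvt : v ⬝ᵥ ((T * (Λ * B)) *ᵥ c) = c ⬝ᵥ ((B * (Λ * B)) *ᵥ c) := by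
    rw [hv, mulVec_dot_mulVec]
    congr 2
    rw [Matrix.transpose_mul, hB, Matrix.mul_assoc B, ← Matrix.mul_assoc ω₁ᵀ, hWT,
      Matrix.one_mul]
  have hvT : v ⬝ᵥ (T *ᵥ c) = c ⬝ᵥ (B *ᵥ c) := by
    rw [hv, mulVec_dot_mulVec]
    congr 2
    rw [Matrix.transpose_mul, hB, Matrix.mul_assoc B, hWT, Matrix.mul_one]
  have huT : u ⬝ᵥ (T *ᵥ c) = c ⬝ᵥ (ω₁⁻¹ *ᵥ u) := by
    rw [dot_mulVec_flip, hTT]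
  have hcz : c ⬝ᵥ (((2 : ℂ) • ω₁)⁻¹ *ᵥ u) = 2⁻¹ * (c ⬝ᵥ (ω₁⁻¹ *ᵥ u)) := by
    rw [hinv2, Matrix.smul_mulVec, dotProduct_smul, smul_eq_mul]
  -- the half integer characteristic
  set n : Fin g → ℤ := fun i => (hβ₂ i).choose with hn
  set N : ℤ := ∑ i, n i * k₂ i with hN
  have hq2 : ((fun i => (β₂ i : ℂ)) ⬝ᵥ c) * 2 = (N : ℂ) := by
    have hNc : (N : ℂ) = ∑ i, (n i : ℂ) * (k₂ i : ℂ) := by rw [hN]; push_cast; rfl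
    rw [hNc, dotProduct, Finset.sum_mul]
    refine Finset.sum_congr rfl fun i _ => ?_
    have hi : β₂ i = (n i : ℝ) / 2 := (hβ₂ i).choose_spec
    rw [hc]
    push_cast [hi]
    ring
  have hsplit : (fun i => (((2 : ℂ) • ω₁)⁻¹ *ᵥ u) i + (β₂ i : ℂ))
      = (((2 : ℂ) • ω₁)⁻¹ *ᵥ u) + (fun i => (β₂ i : ℂ)) := rfl
  rw [sigma, sigma, harg, theta_shift β₁ β₂ B hB _ k₂, hsplit]
  have key : Complex.exp ((1 / 2 : ℂ) * ((u + ((2 : ℂ) • (ω₁ * B)) *ᵥ c) ⬝ᵥ (M *ᵥ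
          (u + ((2 : ℂ) • (ω₁ * B)) *ᵥ c))))
        * Complex.exp (-(↑Real.pi * I) * (c ⬝ᵥ (B *ᵥ c))
          - 2 * ↑Real.pi * I * (c ⬝ᵥ ((((2 : ℂ) • ω₁)⁻¹ *ᵥ u) + (fun i => (β₂ i : ℂ)))))
      = Complex.exp (2 * ↑Real.pi * I * ((fun i => (β₂ i : ℂ)) ⬝ᵥ c))
        * Complex.exp (2 * ((v + u)
            ⬝ᵥ ((T * (Λ * B - ((↑Real.pi * I / 2 : ℂ)) • (1 : Matrix (Fin g) (Fin g) ℂ)))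
                *ᵥ c)))
        * Complex.exp ((1 / 2 : ℂ) * (u ⬝ᵥ (M *ᵥ u))) := by
    rw [← Complex.exp_add, ← Complex.exp_add, ← Complex.exp_add]
    refine Complex.exp_eq_exp_iff_exists_int.mpr ⟨-N, ?_⟩
    have hTexp : T * (Λ * B - ((↑Real.pi * I / 2 : ℂ)) • (1 : Matrix (Fin g) (Fin g) ℂ))
        = T * (Λ * B) - ((↑Real.pi * I / 2 : ℂ)) • T := by
      rw [Matrix.mul_sub, Matrix.mul_smul, Matrix.mul_one]
    rw [hTexp, hv2]
    simp only [Matrix.mulVec_add, Matrix.mulVec_smul, Matrix.sub_mulVec,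
      Matrix.smul_mulVec, dotProduct_add, add_dotProduct,
      dotProduct_sub, sub_dotProduct, smul_dotProduct,
      dotProduct_smul, smul_eq_mul]
    rw [hMv]
    simp only [hvMu, hvt, hvT, huT, hcz]
    have hqc : c ⬝ᵥ (fun i => (β₂ i : ℂ)) = (fun i => (β₂ i : ℂ)) ⬝ᵥ c :=
      dotProduct_comm _ _
    rw [hqc]
    push_cast
    linear_combination (-(2 * (Real.pi : ℂ) * I)) * hq2
  linear_combination (F * ((2 : ℂ) • ω₁).det * theta β₁ β₂ B (((2 : ℂ) • ω₁)⁻¹ *ᵥ u)) * key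
end
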